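/- arXiv:1212.2575 — 8 statements merged into one kernel-verified Lean document; each statement's English description precedes it below -/
import Mathlib

section
/- Let n ≥ 1 and let A, B, C be n×n complex positive semidefinite matrices. Define J[M] := (tr M)·I − M for any n×n matrix M. Then the matrix A·J[B·C] + C·J[B·A] is positive semidefinite. -/
open Matrix ComplexOrder

/-- `J[M] := (tr M) • I − M`. -/
noncomputable def Jmat {n : ℕ} (M : Matrix (Fin n) (Fin n) ℂ) : Matrix (Fin n) (Fin n) ℂ :=
  M.trace • (1 : Matrix (Fin n) (Fin n) ℂ) - M

/-!
Write `a = tr(BA)` and `c = tr(BC)`, so that `A J[BC] + C J[BA] = cA + aC - ABC - CBA`.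
A positive semidefinite `M` satisfies `M ≤ tr(M) I`; conjugating this for `M = A^{1/2} B A^{1/2}`
gives `ABA ≤ aA`, and likewise `CBC ≤ cC`. Then
`ac (cA + aC - ABC - CBA) = c²(aA - ABA) + a²(cC - CBC) + (cA - aC) B (cA - aC) ≥ 0`,
which settles the case `ac ≠ 0`. If `a = 0`, then `BA = 0`, so the matrix is `cA ≥ 0`;
the case `c = 0` is symmetric.
-/

open scoped MatrixOrder

namespace Matrix

variable {𝕜 ι : Type*} [RCLike 𝕜] [Fintype ι]

theorem PosSemidef.le_trace_smul_one [DecidableEq ι] {M : Matrix ι ι 𝕜} (hM : M.PosSemidef) :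
    M ≤ M.trace • (1 : Matrix ι ι 𝕜) := by
  have hH := hM.isHermitian
  have hspec : ∀ x ∈ spectrum ℝ M, x ≤ ∑ i, hH.eigenvalues i := by
    rw [hH.spectrum_real_eq_range_eigenvalues]
    rintro _ ⟨i, rfl⟩
    exact Finset.single_le_sum (fun j _ ↦ hM.eigenvalues_nonneg j) (Finset.mem_univ i)
  calc M ≤ algebraMap ℝ (Matrix ι ι 𝕜) (∑ i, hH.eigenvalues i) :=
        le_algebraMap_of_spectrum_le hspec hH.isSelfAdjoint
    _ = M.trace • 1 := by
        rw [Algebra.algebraMap_eq_smul_one, hH.trace_eq_sum_eigenvalues, ← RCLike.ofReal_sum,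
          RCLike.real_smul_eq_coe_smul (K := 𝕜)]

theorem PosSemidef.mul_mul_le_trace_smul [DecidableEq ι] {A B : Matrix ι ι 𝕜}
    (hA : A.PosSemidef) (hB : B.PosSemidef) : A * B * A ≤ (B * A).trace • A := by
  set T := CFC.sqrt A
  have hT : IsSelfAdjoint T := (CFC.sqrt_nonneg A).isSelfAdjoint
  have hTT : T * T = A := CFC.sqrt_mul_sqrt_self A hA.nonneg
  have hTBT : (T * B * T).PosSemidef := nonneg_iff_posSemidef.mp (hT.conjugate_nonneg hB.nonneg)
  have htrace : (T * B * T).trace = (B * A).trace := by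
    rw [trace_mul_cycle, hTT, trace_mul_comm]
  calc A * B * A = T * (T * B * T) * T := by rw [← hTT]; noncomm_ring
    _ ≤ T * ((T * B * T).trace • 1) * T := hT.conjugate_le_conjugate hTBT.le_trace_smul_one
    _ = (B * A).trace • A := by rw [htrace, mul_smul_comm, mul_one, smul_mul_assoc, hTT]

theorem PosSemidef.trace_mul_nonneg {A B : Matrix ι ι 𝕜} (hA : A.PosSemidef)
    (hB : B.PosSemidef) : 0 ≤ (B * A).trace := by
  classical
  obtain ⟨T, rfl⟩ := CStarAlgebra.nonneg_iff_eq_star_mul_self.mp hA.nonneg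
  rw [← mul_assoc, trace_mul_cycle]
  exact (hB.mul_mul_conjTranspose_same T).trace_nonneg

theorem PosSemidef.mul_eq_zero_of_trace_mul_eq_zero {A B : Matrix ι ι 𝕜} (hA : A.PosSemidef)
    (hB : B.PosSemidef) (h : (B * A).trace = 0) : B * A = 0 := by
  classical
  obtain ⟨S, rfl⟩ := CStarAlgebra.nonneg_iff_eq_star_mul_self.mp hB.nonneg
  obtain ⟨T, rfl⟩ := CStarAlgebra.nonneg_iff_eq_star_mul_self.mp hA.nonneg
  have hST : S * star T = 0 := by
    rw [← trace_conjTranspose_mul_self_eq_zero_iff, ← h]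
    simp only [conjTranspose_mul, star_eq_conjTranspose, conjTranspose_conjTranspose]
    rw [← mul_assoc, trace_mul_comm, ← mul_assoc, ← mul_assoc, mul_assoc, trace_mul_comm]
  calc star S * S * (star T * T) = star S * (S * star T) * T := by noncomm_ring
    _ = 0 := by rw [hST, mul_zero, zero_mul]

end Matrix

theorem posSemidef_mul_Jmat_add_mul_Jmat_of_trace_eq_zero {n : ℕ}
    {A B C : Matrix (Fin n) (Fin n) ℂ} (hA : A.PosSemidef) (hB : B.PosSemidef)
    (hC : C.PosSemidef) (h : (B * A).trace = 0) :
    (A * Jmat (B * C) + C * Jmat (B * A)).PosSemidef := by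
  have hBA : B * A = 0 := hA.mul_eq_zero_of_trace_mul_eq_zero hB h
  have hAB : A * B = 0 := by
    simpa [hA.isHermitian.eq, hB.isHermitian.eq] using congr_arg conjTranspose hBA
  have hK : A * Jmat (B * C) + C * Jmat (B * A) = (B * C).trace • A := by
    rw [Jmat, Jmat, h, hBA, mul_sub, ← mul_assoc, hAB]
    simp
  rw [hK]
  exact hA.smul (hC.trace_mul_nonneg hB)

theorem posSemidef_mul_Jmat_add_mul_Jmat_of_trace_ne_zero {n : ℕ}
    {A B C : Matrix (Fin n) (Fin n) ℂ} (hA : A.PosSemidef) (hB : B.PosSemidef)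
    (hC : C.PosSemidef) (hBA : (B * A).trace ≠ 0) (hBC : (B * C).trace ≠ 0) :
    (A * Jmat (B * C) + C * Jmat (B * A)).PosSemidef := by
  set a := (B * A).trace
  set c := (B * C).trace
  have ha : 0 < a := (hA.trace_mul_nonneg hB).lt_of_ne' hBA
  have hc : 0 < c := (hC.trace_mul_nonneg hB).lt_of_ne' hBC
  have hK : (a * c) • (A * Jmat (B * C) + C * Jmat (B * A)) =
      c ^ 2 • (a • A - A * B * A) + a ^ 2 • (c • C - C * B * C) +
        (c • A - a • C) * B * (c • A - a • C) := by
    simp only [Jmat, mul_sub, sub_mul, mul_smul_comm, smul_mul_assoc, mul_one, mul_assoc]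
    module
  have hX : IsSelfAdjoint (c • A - a • C) :=
    ((IsSelfAdjoint.of_nonneg hc.le).smul hA.isHermitian).sub
      ((IsSelfAdjoint.of_nonneg ha.le).smul hC.isHermitian)
  have hscaled : ((a * c) • (A * Jmat (B * C) + C * Jmat (B * A))).PosSemidef := by
    rw [hK]
    refine (PosSemidef.add ?_ ?_).add ?_
    · exact (le_iff.mp (hA.mul_mul_le_trace_smul hB)).smul (pow_nonneg hc.le 2)
    · exact (le_iff.mp (hC.mul_mul_le_trace_smul hB)).smul (pow_nonneg ha.le 2)
    · exact nonneg_iff_posSemidef.mp (hX.conjugate_nonneg hB.nonneg)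
  have hac : 0 < a * c := mul_pos ha hc
  simpa only [smul_smul, inv_mul_cancel₀ hac.ne', one_smul] using
    hscaled.smul (inv_nonneg.mpr hac.le)

theorem stmt0_general {n : ℕ} (A B C : Matrix (Fin n) (Fin n) ℂ)
    (hA : A.PosSemidef) (hB : B.PosSemidef) (hC : C.PosSemidef) :
    (A * Jmat (B * C) + C * Jmat (B * A)).PosSemidef := by
  rcases eq_or_ne (B * A).trace 0 with hBA | hBA
  · exact posSemidef_mul_Jmat_add_mul_Jmat_of_trace_eq_zero hA hB hC hBA
  rcases eq_or_ne (B * C).trace 0 with hBC | hBC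
  · rw [add_comm]
    exact posSemidef_mul_Jmat_add_mul_Jmat_of_trace_eq_zero hC hB hA hBC
  exact posSemidef_mul_Jmat_add_mul_Jmat_of_trace_ne_zero hA hB hC hBA hBC

theorem stmt0 {n : ℕ} (hn : 1 ≤ n) (A B C : Matrix (Fin n) (Fin n) ℂ)
    (hA : A.PosSemidef) (hB : B.PosSemidef) (hC : C.PosSemidef) :
    (A * Jmat (B * C) + C * Jmat (B * A)).PosSemidef :=
  stmt0_general A B C hA hB hC
end

section
/- Let n ≥ 1 and let A, B, C be n×n complex positive semidefinite matrices. Define J[M] := (tr M)·I − M. Then J[A·B]·C + J[C·B]·A is positive semidefinite. -/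
/-!
Fix `x` and put `s = x* A B C x = ⟨A x, B (C x)⟩`. Then
`x* (J[AB] C + J[CB] A) x = tr(AB) · x* C x + tr(CB) · x* A x - 2 Re s`.
Cauchy–Schwarz for the semi-inner product of `B` bounds `|s|²` by `(Ax)* B (Ax) · (Cx)* B (Cx)`,
and writing `A = aᴴ a`, `(Ax)* B (Ax) = (ax)* (a B aᴴ) (ax) ≤ tr(a B aᴴ) · |ax|² = tr(AB) · x* A x`
because a positive semidefinite `P` satisfies `P ≤ (tr P) I` (the Frobenius bound for `P = Tᴴ T`).
Hence `|s|² ≤ (tr(AB) · x* C x) · (tr(CB) · x* A x)`, and AM–GM gives `2 Re s ≤` their sum.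
-/

open Matrix ComplexOrder

namespace Matrix

section StarRing

variable {R m n : Type*} [CommSemiring R] [StarRing R] [Fintype m] [Fintype n]

lemma star_dotProduct_conjTranspose_mul_mul_mulVec (M : Matrix m n R) (P : Matrix m m R)
    (N : Matrix m n R) (x y : n → R) :
    star x ⬝ᵥ (Mᴴ * P * N) *ᵥ y = star (M *ᵥ x) ⬝ᵥ P *ᵥ (N *ᵥ y) := by
  rw [star_mulVec, ← dotProduct_mulVec, mulVec_mulVec, mulVec_mulVec, Matrix.mul_assoc]

lemma star_star_dotProduct_mulVec (M : Matrix n n R) (x : n → R) :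
    star (star x ⬝ᵥ M *ᵥ x) = star x ⬝ᵥ Mᴴ *ᵥ x := by
  rw [star_dotProduct, star_mulVec, star_star, ← dotProduct_mulVec]

end StarRing

open RCLike

variable {𝕜 m n : Type*} [RCLike 𝕜] [Fintype m] [Fintype n]

lemma re_star_dotProduct_self (v : n → 𝕜) : re (star v ⬝ᵥ v) = ‖WithLp.toLp 2 v‖ ^ 2 := by
  rw [@norm_sq_eq_re_inner 𝕜, EuclideanSpace.inner_toLp_toLp, dotProduct_comm]

section Frobenius

open scoped Matrix.Norms.Frobenius

lemma frobenius_norm_sq_eq_re_trace (T : Matrix m n 𝕜) : ‖T‖ ^ 2 = re (Tᴴ * T).trace := by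
  rw [← star_vec_dotProduct_vec, re_star_dotProduct_self, EuclideanSpace.norm_sq_eq,
    frobenius_norm_def, ← Real.rpow_natCast, ← Real.rpow_mul (by positivity)]
  simp [Fintype.sum_prod_type, Finset.sum_comm (γ := m), vec]

lemma frobenius_norm_toLp_mulVec_le (T : Matrix m n 𝕜) (y : n → 𝕜) :
    ‖WithLp.toLp 2 (T *ᵥ y)‖ ≤ ‖T‖ * ‖WithLp.toLp 2 y‖ := by
  rw [← frobenius_norm_replicateCol (ι := Unit), ← frobenius_norm_replicateCol (ι := Unit),
    replicateCol_mulVec]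
  exact frobenius_norm_mul _ _

lemma re_star_mulVec_dotProduct_mulVec_le_trace_conjTranspose_mul_self (T : Matrix m n 𝕜)
    (y : n → 𝕜) : re (star (T *ᵥ y) ⬝ᵥ T *ᵥ y) ≤ re (Tᴴ * T).trace * re (star y ⬝ᵥ y) := by
  rw [re_star_dotProduct_self, re_star_dotProduct_self, ← frobenius_norm_sq_eq_re_trace,
    ← mul_pow]
  exact pow_le_pow_left₀ (norm_nonneg _) (frobenius_norm_toLp_mulVec_le T y) 2

end Frobenius

lemma two_mul_re_le_add_of_norm_sq_le {s : 𝕜} {a b : ℝ} (ha : 0 ≤ a) (hb : 0 ≤ b)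
    (h : ‖s‖ ^ 2 ≤ a * b) : 2 * re s ≤ a + b := by
  nlinarith [re_le_norm s, norm_nonneg s, sq_nonneg (a - b)]

namespace PosSemidef

open scoped MatrixOrder in
lemma exists_eq_conjTranspose_mul_self {P : Matrix n n 𝕜} (hP : P.PosSemidef) :
    ∃ T : Matrix n n 𝕜, P = Tᴴ * T := by
  classical
  exact CStarAlgebra.nonneg_iff_eq_star_mul_self.mp hP.nonneg

lemma trace_mul_nonneg_s1 {A B : Matrix n n 𝕜} (hA : A.PosSemidef) (hB : B.PosSemidef) :
    0 ≤ (A * B).trace := by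
  obtain ⟨a, rfl⟩ := hA.exists_eq_conjTranspose_mul_self
  rw [Matrix.mul_assoc, trace_mul_comm]
  exact (hB.mul_mul_conjTranspose_same a).trace_nonneg

lemma re_dotProduct_mulVec_le_trace_mul {P : Matrix n n 𝕜} (hP : P.PosSemidef) (y : n → 𝕜) :
    re (star y ⬝ᵥ P *ᵥ y) ≤ re P.trace * re (star y ⬝ᵥ y) := by
  obtain ⟨T, rfl⟩ := hP.exists_eq_conjTranspose_mul_self
  rw [← mulVec_mulVec, dotProduct_mulVec, ← star_mulVec]
  exact re_star_mulVec_dotProduct_mulVec_le_trace_conjTranspose_mul_self T y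

lemma re_star_mulVec_dotProduct_mulVec_le_trace_mul {A B : Matrix n n 𝕜} (hA : A.PosSemidef)
    (hB : B.PosSemidef) (x : n → 𝕜) :
    re (star (A *ᵥ x) ⬝ᵥ B *ᵥ (A *ᵥ x)) ≤ re (A * B).trace * re (star x ⬝ᵥ A *ᵥ x) := by
  obtain ⟨a, rfl⟩ := hA.exists_eq_conjTranspose_mul_self
  have h := (hB.mul_mul_conjTranspose_same a).re_dotProduct_mulVec_le_trace_mul (a *ᵥ x)
  rwa [Matrix.mul_assoc aᴴ a B, trace_mul_comm, ← mulVec_mulVec,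
    ← star_dotProduct_conjTranspose_mul_mul_mulVec aᴴ B aᴴ, conjTranspose_conjTranspose,
    dotProduct_mulVec (star x) aᴴ, ← star_mulVec]

lemma norm_dotProduct_mulVec_sq_le {B : Matrix n n 𝕜} (hB : B.PosSemidef) (u w : n → 𝕜) :
    ‖star u ⬝ᵥ B *ᵥ w‖ ^ 2 ≤ re (star u ⬝ᵥ B *ᵥ u) * re (star w ⬝ᵥ B *ᵥ w) := by
  let := B.toSeminormedAddCommGroup hB
  let := B.toInnerProductSpace hB
  have h := inner_mul_inner_self_le (𝕜 := 𝕜) u w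
  rw [norm_inner_symm w u, ← sq] at h
  change ‖(B *ᵥ w) ⬝ᵥ star u‖ ^ 2 ≤ re ((B *ᵥ u) ⬝ᵥ star u) * re ((B *ᵥ w) ⬝ᵥ star w) at h
  simpa only [dotProduct_comm _ (star _)] using h

lemma norm_dotProduct_mul_mul_mulVec_sq_le {A B C : Matrix n n 𝕜} (hA : A.PosSemidef)
    (hB : B.PosSemidef) (hC : C.PosSemidef) (x : n → 𝕜) :
    ‖star x ⬝ᵥ (A * B * C) *ᵥ x‖ ^ 2 ≤
      (re (A * B).trace * re (star x ⬝ᵥ A *ᵥ x)) * (re (C * B).trace * re (star x ⬝ᵥ C *ᵥ x)) :=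
  calc ‖star x ⬝ᵥ (A * B * C) *ᵥ x‖ ^ 2 = ‖star (A *ᵥ x) ⬝ᵥ B *ᵥ (C *ᵥ x)‖ ^ 2 := by
        rw [← star_dotProduct_conjTranspose_mul_mul_mulVec, hA.1.eq]
    _ ≤ re (star (A *ᵥ x) ⬝ᵥ B *ᵥ (A *ᵥ x)) * re (star (C *ᵥ x) ⬝ᵥ B *ᵥ (C *ᵥ x)) :=
        hB.norm_dotProduct_mulVec_sq_le _ _
    _ ≤ _ :=
        mul_le_mul (hA.re_star_mulVec_dotProduct_mulVec_le_trace_mul hB x)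
          (hC.re_star_mulVec_dotProduct_mulVec_le_trace_mul hB x) (hB.re_dotProduct_nonneg _)
          (mul_nonneg (nonneg_iff.1 (hA.trace_mul_nonneg_s1 hB)).1 (hA.re_dotProduct_nonneg x))

theorem trace_mul_smul_add_trace_mul_smul_sub {A B C : Matrix n n 𝕜}
    (hA : A.PosSemidef) (hB : B.PosSemidef) (hC : C.PosSemidef) :
    ((A * B).trace • C + (C * B).trace • A - (A * B * C + C * B * A)).PosSemidef := by
  obtain ⟨p, hp, hpAB⟩ := nonneg_iff_exists_ofReal.1 (hA.trace_mul_nonneg_s1 hB)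
  obtain ⟨q, hq, hqCB⟩ := nonneg_iff_exists_ofReal.1 (hC.trace_mul_nonneg_s1 hB)
  have hABC : (A * B * C)ᴴ = C * B * A := by
    rw [conjTranspose_mul, conjTranspose_mul, hA.1, hB.1, hC.1, Matrix.mul_assoc]
  rw [← hpAB, ← hqCB, ← hABC]
  have hM : ((p : 𝕜) • C + (q : 𝕜) • A - (A * B * C + (A * B * C)ᴴ)).IsHermitian := by
    simp only [IsHermitian, conjTranspose_sub, conjTranspose_add, conjTranspose_smul,
      conjTranspose_conjTranspose, hA.1.eq, hC.1.eq, star_def, conj_ofReal,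
      add_comm (A * B * C)ᴴ]
  refine of_dotProduct_mulVec_nonneg hM fun x ↦
    nonneg_iff.2 ⟨?_, hM.im_star_dotProduct_mulVec_self x⟩
  have hCS := hA.norm_dotProduct_mul_mul_mulVec_sq_le hB hC x
  rw [← hpAB, ← hqCB, ofReal_re, ofReal_re] at hCS
  have hAM_GM := two_mul_re_le_add_of_norm_sq_le (mul_nonneg hp (hC.re_dotProduct_nonneg x))
    (mul_nonneg hq (hA.re_dotProduct_nonneg x)) (hCS.trans_eq (by ring))
  simp only [sub_mulVec, add_mulVec, smul_mulVec, dotProduct_sub, dotProduct_add,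
    dotProduct_smul, smul_eq_mul, ← star_star_dotProduct_mulVec, map_sub, map_add,
    re_ofReal_mul, star_def, conj_re]
  linarith

end PosSemidef

end Matrix

lemma Jmat_mul_add_Jmat_mul {n : ℕ} (A B C : Matrix (Fin n) (Fin n) ℂ) :
    Jmat (A * B) * C + Jmat (C * B) * A =
      (A * B).trace • C + (C * B).trace • A - (A * B * C + C * B * A) := by
  simp only [Jmat, Matrix.sub_mul, Matrix.smul_mul, Matrix.one_mul]
  abel

theorem stmt1_general {n : ℕ} (A B C : Matrix (Fin n) (Fin n) ℂ)
    (hA : A.PosSemidef) (hB : B.PosSemidef) (hC : C.PosSemidef) :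
    (Jmat (A * B) * C + Jmat (C * B) * A).PosSemidef := by
  rw [Jmat_mul_add_Jmat_mul]
  exact hA.trace_mul_smul_add_trace_mul_smul_sub hB hC

theorem stmt1 {n : ℕ} (hn : 1 ≤ n) (A B C : Matrix (Fin n) (Fin n) ℂ)
    (hA : A.PosSemidef) (hB : B.PosSemidef) (hC : C.PosSemidef) :
    (Jmat (A * B) * C + Jmat (C * B) * A).PosSemidef :=
  stmt1_general A B C hA hB hC
end

section
/- For all n×n positive semidefinite matrices A, B, C and every vector ψ ∈ ℂⁿ, the quantity ⟨ψ, (A·tr(BC) + C·tr(AB) − ABC − CBA)·ψ⟩ equals ∑_{i,j,k} a_i b_j c_k |⟨ψ,α_i⟩⟨β_j,γ_k⟩ − ⟨ψ,γ_k⟩⟨β_j,α_i⟩|², where (a_i, α_i), (b_j, β_j), (c_k, γ_k) are orthonormal eigensystems of A, B, C respectively; in particular this quantity is nonnegative. -/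
open Matrix ComplexOrder
open scoped BigOperators

private lemma vmv_mulVec {n : ℕ} (u v w : Fin n → ℂ) :
    vecMulVec u v *ᵥ w = (v ⬝ᵥ w) • u := by
  ext i
  simp [Matrix.mulVec, Matrix.vecMulVec_apply, dotProduct, Finset.mul_sum, mul_assoc,
    mul_comm, mul_left_comm]

private lemma vmv_mul_vmv {n : ℕ} (u v u' v' : Fin n → ℂ) :
    vecMulVec u v * vecMulVec u' v' = (v ⬝ᵥ u') • vecMulVec u v' := by
  ext i j
  simp [Matrix.mul_apply, Matrix.vecMulVec_apply, dotProduct, Finset.sum_mul, Finset.mul_sum]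
  ring_nf
  exact Finset.sum_congr rfl fun x _ => by ring

private lemma trace_vmv {n : ℕ} (u v : Fin n → ℂ) :
    (vecMulVec u v).trace = v ⬝ᵥ u := by
  simp [Matrix.trace, Matrix.diag, Matrix.vecMulVec_apply, dotProduct, mul_comm]

private lemma star_dot {n : ℕ} (u v : Fin n → ℂ) :
    star u ⬝ᵥ v = (starRingEnd ℂ) (star v ⬝ᵥ u) := by
  simp [dotProduct, map_sum, mul_comm]

private lemma sum_mulVec' {n : ℕ} (s : Finset (Fin n)) (f : Fin n → Matrix (Fin n) (Fin n) ℂ)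
    (ψ : Fin n → ℂ) : (∑ i ∈ s, f i) *ᵥ ψ = ∑ i ∈ s, f i *ᵥ ψ := by
  ext j
  simp [Matrix.mulVec, dotProduct, Matrix.sum_apply, Finset.sum_mul]
  rw [Finset.sum_comm]

private lemma dot_sum {n : ℕ} (s : Finset (Fin n)) (v : Fin n → ℂ) (f : Fin n → Fin n → ℂ) :
    v ⬝ᵥ (∑ i ∈ s, f i) = ∑ i ∈ s, v ⬝ᵥ f i := by
  simp [dotProduct, Finset.mul_sum, Finset.sum_apply]
  rw [Finset.sum_comm]

theorem stmt2 {n : ℕ} (A B C : Matrix (Fin n) (Fin n) ℂ)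
    (a b c : Fin n → ℝ) (α β γ : Fin n → (Fin n → ℂ))
    (ha : ∀ i, 0 ≤ a i) (hb : ∀ j, 0 ≤ b j) (hc : ∀ k, 0 ≤ c k)
    (hα : ∀ i i', star (α i) ⬝ᵥ α i' = if i = i' then 1 else 0)
    (hβ : ∀ j j', star (β j) ⬝ᵥ β j' = if j = j' then 1 else 0)
    (hγ : ∀ k k', star (γ k) ⬝ᵥ γ k' = if k = k' then 1 else 0)
    (hA : A = ∑ i, (a i : ℂ) • vecMulVec (α i) (star (α i)))
    (hB : B = ∑ j, (b j : ℂ) • vecMulVec (β j) (star (β j)))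
    (hC : C = ∑ k, (c k : ℂ) • vecMulVec (γ k) (star (γ k)))
    (ψ : Fin n → ℂ) :
    star ψ ⬝ᵥ (((B * C).trace • A + (A * B).trace • C - A * B * C - C * B * A) *ᵥ ψ)
      = ∑ i, ∑ j, ∑ k,
          ((a i * b j * c k *
            Complex.normSq ((star ψ ⬝ᵥ α i) * (star (β j) ⬝ᵥ γ k)
              - (star ψ ⬝ᵥ γ k) * (star (β j) ⬝ᵥ α i)) : ℝ) : ℂ)
    ∧ 0 ≤ star ψ ⬝ᵥ (((B * C).trace • A + (A * B).trace • C - A * B * C - C * B * A) *ᵥ ψ) := by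
  set cj : ℂ →+* ℂ := starRingEnd ℂ with hcj
  -- shorthands
  have hdotA : star ψ ⬝ᵥ (A *ᵥ ψ)
      = ∑ i, (a i : ℂ) * ((star ψ ⬝ᵥ α i) * cj (star ψ ⬝ᵥ α i)) := by
    rw [hA, sum_mulVec', dot_sum]
    refine Finset.sum_congr rfl fun i _ => ?_
    rw [smul_mulVec, vmv_mulVec, dotProduct_smul, dotProduct_smul, star_dot]
    simp only [smul_eq_mul, hcj]; ring
  have hdotC : star ψ ⬝ᵥ (C *ᵥ ψ)
      = ∑ k, (c k : ℂ) * ((star ψ ⬝ᵥ γ k) * cj (star ψ ⬝ᵥ γ k)) := by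
    rw [hC, sum_mulVec', dot_sum]
    refine Finset.sum_congr rfl fun k _ => ?_
    rw [smul_mulVec, vmv_mulVec, dotProduct_smul, dotProduct_smul, star_dot]
    simp only [smul_eq_mul, hcj]; ring
  have htrBC : (B * C).trace
      = ∑ j, ∑ k, (b j : ℂ) * (c k) * ((star (β j) ⬝ᵥ γ k) * cj (star (β j) ⬝ᵥ γ k)) := by
    rw [hB, hC, Matrix.sum_mul, Matrix.trace_sum]
    refine Finset.sum_congr rfl fun j _ => ?_
    rw [Matrix.mul_sum, Matrix.trace_sum]
    refine Finset.sum_congr rfl fun k _ => ?_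
    rw [Matrix.smul_mul, Matrix.mul_smul, vmv_mul_vmv, trace_smul, trace_smul, trace_smul,
      trace_vmv, star_dot (γ k) (β j)]
    simp only [smul_eq_mul, hcj]; ring
  have htrAB : (A * B).trace
      = ∑ i, ∑ j, (a i : ℂ) * (b j) * ((star (β j) ⬝ᵥ α i) * cj (star (β j) ⬝ᵥ α i)) := by
    rw [hA, hB, Matrix.sum_mul, Matrix.trace_sum]
    refine Finset.sum_congr rfl fun i _ => ?_
    rw [Matrix.mul_sum, Matrix.trace_sum]
    refine Finset.sum_congr rfl fun j _ => ?_
    rw [Matrix.smul_mul, Matrix.mul_smul, vmv_mul_vmv, trace_smul, trace_smul, trace_smul,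
      trace_vmv, star_dot (α i) (β j)]
    simp only [smul_eq_mul, hcj]; ring
  have hABC : star ψ ⬝ᵥ ((A * B * C) *ᵥ ψ)
      = ∑ i, ∑ j, ∑ k, (a i : ℂ) * (b j) * (c k) *
          (cj (star (β j) ⬝ᵥ α i) * (star (β j) ⬝ᵥ γ k) * (star ψ ⬝ᵥ α i)
            * cj (star ψ ⬝ᵥ γ k)) := by
    rw [hA, Matrix.sum_mul, Matrix.sum_mul, sum_mulVec', dot_sum]
    refine Finset.sum_congr rfl fun i _ => ?_
    rw [hB, Matrix.mul_sum, Matrix.sum_mul, sum_mulVec', dot_sum]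
    refine Finset.sum_congr rfl fun j _ => ?_
    rw [hC, Matrix.mul_sum, sum_mulVec', dot_sum]
    refine Finset.sum_congr rfl fun k _ => ?_
    simp only [Matrix.smul_mul, Matrix.mul_smul, vmv_mul_vmv, smul_smul, smul_mulVec,
      vmv_mulVec, dotProduct_smul, smul_eq_mul]
    rw [star_dot (α i) (β j), star_dot (γ k) ψ]
    simp only [hcj]; ring
  have hCBA : star ψ ⬝ᵥ ((C * B * A) *ᵥ ψ)
      = ∑ i, ∑ j, ∑ k, (a i : ℂ) * (b j) * (c k) *
          (cj (star (β j) ⬝ᵥ γ k) * (star (β j) ⬝ᵥ α i) * (star ψ ⬝ᵥ γ k)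
            * cj (star ψ ⬝ᵥ α i)) := by
    rw [hA, Matrix.mul_sum, sum_mulVec', dot_sum]
    refine Finset.sum_congr rfl fun i _ => ?_
    rw [hB, Matrix.mul_sum, Matrix.sum_mul, sum_mulVec', dot_sum]
    refine Finset.sum_congr rfl fun j _ => ?_
    rw [hC, Matrix.sum_mul, Matrix.sum_mul, sum_mulVec', dot_sum]
    refine Finset.sum_congr rfl fun k _ => ?_
    simp only [Matrix.smul_mul, Matrix.mul_smul, vmv_mul_vmv, smul_smul, smul_mulVec,
      vmv_mulVec, dotProduct_smul, smul_eq_mul]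
    rw [star_dot (γ k) (β j), star_dot (α i) ψ]
    simp only [hcj]; ring
  have key : star ψ ⬝ᵥ (((B * C).trace • A + (A * B).trace • C - A * B * C - C * B * A) *ᵥ ψ)
      = ∑ i, ∑ j, ∑ k,
          ((a i * b j * c k *
            Complex.normSq ((star ψ ⬝ᵥ α i) * (star (β j) ⬝ᵥ γ k)
              - (star ψ ⬝ᵥ γ k) * (star (β j) ⬝ᵥ α i)) : ℝ) : ℂ) := by
    rw [sub_mulVec, sub_mulVec, add_mulVec, smul_mulVec, smul_mulVec,
      dotProduct_sub, dotProduct_sub, dotProduct_add, dotProduct_smul, dotProduct_smul]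
    simp only [smul_eq_mul]
    rw [hdotA, hdotC, htrBC, htrAB, hABC, hCBA]
    have hP1 : (∑ j, ∑ k, (b j : ℂ) * (c k) * ((star (β j) ⬝ᵥ γ k) * cj (star (β j) ⬝ᵥ γ k)))
        * (∑ i, (a i : ℂ) * ((star ψ ⬝ᵥ α i) * cj (star ψ ⬝ᵥ α i)))
        = ∑ i, ∑ j, ∑ k, (a i : ℂ) * ((star ψ ⬝ᵥ α i) * cj (star ψ ⬝ᵥ α i))
            * ((b j : ℂ) * (c k) * ((star (β j) ⬝ᵥ γ k) * cj (star (β j) ⬝ᵥ γ k))) := by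
      rw [mul_comm (∑ j, ∑ k, (b j : ℂ) * (c k) * ((star (β j) ⬝ᵥ γ k) * cj (star (β j) ⬝ᵥ γ k)))
        (∑ i, (a i : ℂ) * ((star ψ ⬝ᵥ α i) * cj (star ψ ⬝ᵥ α i)))]
      simp only [Finset.sum_mul]
      simp only [Finset.mul_sum]
    have hP2 : (∑ i, ∑ j, (a i : ℂ) * (b j) * ((star (β j) ⬝ᵥ α i) * cj (star (β j) ⬝ᵥ α i)))
        * (∑ k, (c k : ℂ) * ((star ψ ⬝ᵥ γ k) * cj (star ψ ⬝ᵥ γ k)))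
        = ∑ i, ∑ j, ∑ k, (a i : ℂ) * (b j) * ((star (β j) ⬝ᵥ α i) * cj (star (β j) ⬝ᵥ α i))
            * ((c k : ℂ) * ((star ψ ⬝ᵥ γ k) * cj (star ψ ⬝ᵥ γ k))) := by
      simp only [Finset.sum_mul]
      simp only [Finset.mul_sum]
    rw [hP1, hP2]
    simp only [← Finset.sum_add_distrib, ← Finset.sum_sub_distrib]
    refine Finset.sum_congr rfl fun i _ => Finset.sum_congr rfl fun j _ =>
      Finset.sum_congr rfl fun k _ => ?_
    rw [Complex.ofReal_mul, Complex.ofReal_mul, Complex.ofReal_mul, ← Complex.mul_conj]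
    simp only [hcj, map_sub, _root_.map_mul]
    ring
  refine ⟨key, key ▸ ?_⟩
  refine Finset.sum_nonneg fun i _ => Finset.sum_nonneg fun j _ => Finset.sum_nonneg fun k _ => ?_
  rw [Complex.zero_le_real]
  exact mul_nonneg (mul_nonneg (mul_nonneg (ha i) (hb j)) (hc k)) (Complex.normSq_nonneg _)
end

section
/- There is a constant C > 0 such that for all Hermitian n×n complex matrices M, M' one has ‖Φ[M'] − Φ[M]‖ ≤ C·‖M' − M‖ in the Hilbert–Schmidt norm, where Φ[M] is defined by functional calculus from Φ(x) = max(0, min(x,1)). -/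
open Matrix

/-- The Hilbert–Schmidt (Frobenius) norm: `‖M‖² = ∑_{i,j} |M_{ij}|²`. -/
noncomputable def hsNorm {n : ℕ} (M : Matrix (Fin n) (Fin n) ℂ) : ℝ :=
  Real.sqrt (∑ i, ∑ j, Complex.normSq (M i j))

private lemma sumSq_eq_trace {n : ℕ} (M : Matrix (Fin n) (Fin n) ℂ) :
    ∑ i, ∑ j, Complex.normSq (M i j) = (Matrix.trace (Mᴴ * M)).re := by
  rw [Matrix.trace, Complex.re_sum, Finset.sum_comm]
  refine Finset.sum_congr rfl fun i _ => ?_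
  rw [Matrix.diag_apply, Matrix.mul_apply, Complex.re_sum]
  refine Finset.sum_congr rfl fun j _ => ?_
  simp [Matrix.conjTranspose_apply, Complex.normSq_apply, Complex.mul_re]

private lemma sumSq_conj {n : ℕ} (M U V : Matrix (Fin n) (Fin n) ℂ)
    (hU : U ∈ unitary (Matrix (Fin n) (Fin n) ℂ))
    (hV : V ∈ unitary (Matrix (Fin n) (Fin n) ℂ)) :
    ∑ i, ∑ j, Complex.normSq ((star U * M * V) i j)
      = ∑ i, ∑ j, Complex.normSq (M i j) := by
  rw [sumSq_eq_trace, sumSq_eq_trace]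
  congr 1
  have h1 : U * star U = 1 := Unitary.mul_star_self_of_mem hU
  have h2 : V * star V = 1 := Unitary.mul_star_self_of_mem hV
  have : (star U * M * V)ᴴ * (star U * M * V) = star V * (Mᴴ * M) * V := by
    rw [← Matrix.star_eq_conjTranspose, ← Matrix.star_eq_conjTranspose]
    simp only [StarMul.star_mul, star_star, mul_assoc]
    rw [← mul_assoc U (star U), h1, one_mul]
  rw [this, Matrix.trace_mul_cycle, ← mul_assoc, h2, one_mul]

private lemma key_lipschitz {n : ℕ} {A B : Matrix (Fin n) (Fin n) ℂ}
    (hA : A.IsHermitian) (hB : B.IsHermitian) {f : ℝ → ℝ}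
    (hf : ∀ x y : ℝ, |f x - f y| ≤ |x - y|) :
    hsNorm (cfc f A - cfc f B) ≤ hsNorm (A - B) := by
  set u : Matrix (Fin n) (Fin n) ℂ := (hA.eigenvectorUnitary : Matrix (Fin n) (Fin n) ℂ) with hu
  set v : Matrix (Fin n) (Fin n) ℂ := (hB.eigenvectorUnitary : Matrix (Fin n) (Fin n) ℂ) with hv
  have hum : u ∈ unitary (Matrix (Fin n) (Fin n) ℂ) := SetLike.coe_mem _
  have hvm : v ∈ unitary (Matrix (Fin n) (Fin n) ℂ) := SetLike.coe_mem _
  have hu1 : star u * u = 1 := Unitary.star_mul_self_of_mem hum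
  have hv1 : star v * v = 1 := Unitary.star_mul_self_of_mem hvm
  set w : Matrix (Fin n) (Fin n) ℂ := star u * v with hw
  set lam := hA.eigenvalues with hlam
  set mu := hB.eigenvalues with hmu
  -- conjugation computations
  have conj_gen : ∀ (D E : Matrix (Fin n) (Fin n) ℂ),
      star u * (u * D * star u - v * E * star v) * v = D * w - w * E := by
    intro D E
    have c1 : star u * (u * D * star u) * v = D * w := by
      rw [hw]; rw [show star u * (u * D * star u) * v = (star u * u) * D * (star u * v) by
        simp only [mul_assoc]]
      rw [hu1, one_mul]
    have c2 : star u * (v * E * star v) * v = w * E := by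
      rw [hw]; rw [show star u * (v * E * star v) * v = (star u * v) * E * (star v * v) by
        simp only [mul_assoc]]
      rw [hv1, mul_one]
    rw [Matrix.mul_sub, Matrix.sub_mul, c1, c2]
  have hAeq : A = u * Matrix.diagonal (Complex.ofReal ∘ lam) * star u := hA.spectral_theorem
  have hBeq : B = v * Matrix.diagonal (Complex.ofReal ∘ mu) * star v := hB.spectral_theorem
  have hcfcA : cfc f A = u * Matrix.diagonal (Complex.ofReal ∘ f ∘ lam) * star u := hA.cfc_eq f
  have hcfcB : cfc f B = v * Matrix.diagonal (Complex.ofReal ∘ f ∘ mu) * star v := hB.cfc_eq f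
  unfold hsNorm
  apply Real.sqrt_le_sqrt
  rw [← sumSq_conj (cfc f A - cfc f B) u v hum hvm, ← sumSq_conj (A - B) u v hum hvm]
  have e1 : star u * (cfc f A - cfc f B) * v
      = Matrix.diagonal (Complex.ofReal ∘ f ∘ lam) * w - w * Matrix.diagonal (Complex.ofReal ∘ f ∘ mu) := by
    rw [hcfcA, hcfcB]; exact conj_gen _ _
  have e2 : star u * (A - B) * v
      = Matrix.diagonal (Complex.ofReal ∘ lam) * w - w * Matrix.diagonal (Complex.ofReal ∘ mu) := by
    conv_lhs => rw [hAeq, hBeq]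
    exact conj_gen _ _
  rw [e1, e2]
  refine Finset.sum_le_sum fun i _ => Finset.sum_le_sum fun j _ => ?_
  have entry : ∀ (g : ℝ → ℝ),
      (Matrix.diagonal (Complex.ofReal ∘ g ∘ lam) * w - w * Matrix.diagonal (Complex.ofReal ∘ g ∘ mu)) i j
        = (Complex.ofReal (g (lam i) - g (mu j))) * w i j := by
    intro g
    simp only [Matrix.sub_apply, Matrix.diagonal_mul, Matrix.mul_diagonal, Function.comp_apply,
      Complex.ofReal_sub]
    ring
  have entry' :
      (Matrix.diagonal (Complex.ofReal ∘ lam) * w - w * Matrix.diagonal (Complex.ofReal ∘ mu)) i j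
        = (Complex.ofReal (lam i - mu j)) * w i j := by
    simp only [Matrix.sub_apply, Matrix.diagonal_mul, Matrix.mul_diagonal, Function.comp_apply,
      Complex.ofReal_sub]
    ring
  rw [entry f, entry', Complex.normSq_mul, Complex.normSq_mul, Complex.normSq_ofReal,
    Complex.normSq_ofReal]
  have hsq : (f (lam i) - f (mu j)) * (f (lam i) - f (mu j)) ≤ (lam i - mu j) * (lam i - mu j) := by
    have := mul_self_le_mul_self (abs_nonneg (f (lam i) - f (mu j))) (hf (lam i) (mu j))
    rwa [abs_mul_abs_self, abs_mul_abs_self] at this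
  exact mul_le_mul_of_nonneg_right hsq (Complex.normSq_nonneg _)

theorem stmt6 :
    ∃ C : ℝ, 0 < C ∧ ∀ (n : ℕ) (M M' : Matrix (Fin n) (Fin n) ℂ),
      M.IsHermitian → M'.IsHermitian →
      hsNorm (cfc (fun x : ℝ => max 0 (min x 1)) M' - cfc (fun x : ℝ => max 0 (min x 1)) M)
        ≤ C * hsNorm (M' - M) := by
  refine ⟨1, one_pos, fun n M M' hM hM' => ?_⟩
  rw [one_mul]
  have hlip : LipschitzWith 1 (fun x : ℝ => max 0 (min x 1)) :=
    (LipschitzWith.id.min_const 1).const_max 0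
  have hf : ∀ x y : ℝ, |max 0 (min x 1) - max 0 (min y 1)| ≤ |x - y| := by
    intro x y
    have := hlip.dist_le_mul x y
    simpa [Real.dist_eq] using this
  exact key_lipschitz hM' hM hf
end

section
/- The matrix absolute value map M ↦ |M| := (M*M)^{1/2} on n×n complex matrices is Lipschitz continuous with respect to the Hilbert–Schmidt norm when restricted to Hermitian matrices; i.e., there is a constant C such that ‖|A| − |B|‖_HS ≤ C·‖A − B‖_HS for all Hermitian A, B. -/
open Matrix ComplexOrder

/-- The matrix absolute value `|M| := (M*M)^{1/2}`, the unique positive semidefinite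
square root of `M*M = Mᴴ * M`. -/
noncomputable def matAbs {n : ℕ} (M : Matrix (Fin n) (Fin n) ℂ) : Matrix (Fin n) (Fin n) ℂ :=
  ((Matrix.posSemidef_conjTranspose_mul_self M).1.eigenvectorUnitary : Matrix (Fin n) (Fin n) ℂ) *
    diagonal ((↑) ∘ Real.sqrt ∘ (Matrix.posSemidef_conjTranspose_mul_self M).1.eigenvalues) *
    (star ((Matrix.posSemidef_conjTranspose_mul_self M).1.eigenvectorUnitary : Matrix (Fin n) (Fin n) ℂ))

/-!
Diagonalize `A = U diag(λ) U*` and `B = V diag(μ) V*` and put `W = U* V`. Conjugating by the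
unitaries `U*`, `V` preserves the Hilbert–Schmidt norm, and for every `f : ℝ → ℝ` it turns
`f(A) - f(B)` into the matrix with entries `(f λᵢ - f μⱼ) Wᵢⱼ`. Hence
`‖f(A) - f(B)‖²_HS = ∑ᵢⱼ (f λᵢ - f μⱼ)² |Wᵢⱼ|²`, so a `K`-Lipschitz `f` acts `K`-Lipschitzly on
Hermitian matrices in the Hilbert–Schmidt norm. For Hermitian `A` the absolute value is `f(A)` with
`f = |·|`, which is `1`-Lipschitz.
-/

open scoped MatrixOrder

namespace Matrix

variable {ι : Type*} [Fintype ι]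

noncomputable def hsNormSq (M : Matrix ι ι ℂ) : ℝ :=
  ∑ i, ∑ j, Complex.normSq (M i j)

lemma ofReal_hsNormSq (M : Matrix ι ι ℂ) : (hsNormSq M : ℂ) = (Mᴴ * M).trace := by
  simp only [hsNormSq, trace, diag, mul_apply, conjTranspose_apply, Complex.ofReal_sum,
    Complex.normSq_eq_conj_mul_self, RCLike.star_def]
  exact Finset.sum_comm

variable [DecidableEq ι]

lemma hsNormSq_star_mul_mul {U V : Matrix ι ι ℂ} (hU : U ∈ unitaryGroup ι ℂ)
    (hV : V ∈ unitaryGroup ι ℂ) (M : Matrix ι ι ℂ) :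
    hsNormSq (star U * M * V) = hsNormSq M := by
  apply Complex.ofReal_injective
  rw [ofReal_hsNormSq, ofReal_hsNormSq, conjTranspose_mul, conjTranspose_mul,
    show (star U)ᴴ = U from star_star U]
  calc (star V * (Mᴴ * U) * (star U * M * V)).trace = (star V * (Mᴴ * M) * V).trace := by
        simp only [Matrix.mul_assoc]
        rw [← Matrix.mul_assoc U, Unitary.mul_star_self_of_mem hU, Matrix.one_mul]
    _ = (Mᴴ * M).trace := by
        rw [trace_mul_comm, ← Matrix.mul_assoc, Unitary.mul_star_self_of_mem hV, Matrix.one_mul]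

lemma star_mul_conj_sub_conj_mul {U V : Matrix ι ι ℂ} (hU : U ∈ unitaryGroup ι ℂ)
    (hV : V ∈ unitaryGroup ι ℂ) (D E : Matrix ι ι ℂ) :
    star U * (U * D * star U - V * E * star V) * V = D * (star U * V) - star U * V * E := by
  simp only [Matrix.mul_sub, Matrix.sub_mul, Matrix.mul_assoc, Unitary.star_mul_self_of_mem hV,
    Matrix.mul_one]
  rw [← Matrix.mul_assoc _ U, Unitary.star_mul_self_of_mem hU, Matrix.one_mul]

lemma hsNormSq_diagonal_mul_sub_mul_diagonal (d e : ι → ℝ) (W : Matrix ι ι ℂ) :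
    hsNormSq (diagonal (RCLike.ofReal ∘ d) * W - W * diagonal (RCLike.ofReal ∘ e))
      = ∑ i, ∑ j, (d i - e j) ^ 2 * Complex.normSq (W i j) := by
  refine Finset.sum_congr rfl fun i _ => Finset.sum_congr rfl fun j _ => ?_
  have : (RCLike.ofReal ∘ d) i * W i j - W i j * (RCLike.ofReal ∘ e) j
      = ((d i - e j : ℝ) : ℂ) * W i j := by
    simp only [Function.comp_apply, RCLike.ofReal_eq_complex_ofReal, Complex.ofReal_sub]
    ring
  rw [sub_apply, diagonal_mul, mul_diagonal, this, Complex.normSq_mul, Complex.normSq_ofReal, sq]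

lemma hsNormSq_cfc_sub_cfc {A B : Matrix ι ι ℂ} (hA : A.IsHermitian) (hB : B.IsHermitian)
    (f : ℝ → ℝ) :
    hsNormSq (cfc f A - cfc f B) =
      ∑ i, ∑ j, (f (hA.eigenvalues i) - f (hB.eigenvalues j)) ^ 2 *
        Complex.normSq
          ((star (hA.eigenvectorUnitary : Matrix ι ι ℂ) * hB.eigenvectorUnitary) i j) := by
  rw [← hsNormSq_star_mul_mul hA.eigenvectorUnitary.2 hB.eigenvectorUnitary.2, hA.cfc_eq,
    hB.cfc_eq, IsHermitian.cfc, IsHermitian.cfc, Unitary.conjStarAlgAut_apply,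
    Unitary.conjStarAlgAut_apply, star_mul_conj_sub_conj_mul hA.eigenvectorUnitary.2
    hB.eigenvectorUnitary.2, hsNormSq_diagonal_mul_sub_mul_diagonal]
  rfl

lemma hsNormSq_cfc_sub_cfc_le {A B : Matrix ι ι ℂ} (hA : A.IsHermitian) (hB : B.IsHermitian)
    {f : ℝ → ℝ} {K : NNReal} (hf : LipschitzWith K f) :
    hsNormSq (cfc f A - cfc f B) ≤ K ^ 2 * hsNormSq (A - B) := by
  have hf_sq (x y : ℝ) : (f x - f y) ^ 2 ≤ K ^ 2 * (x - y) ^ 2 := by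
    have h := hf.dist_le_mul x y
    rw [Real.dist_eq, Real.dist_eq] at h
    calc (f x - f y) ^ 2 = |f x - f y| ^ 2 := (sq_abs _).symm
      _ ≤ (K * |x - y|) ^ 2 := by gcongr
      _ = K ^ 2 * (x - y) ^ 2 := by rw [mul_pow, sq_abs]
  conv_rhs => rw [← cfc_id' ℝ A, ← cfc_id' ℝ B]
  rw [hsNormSq_cfc_sub_cfc hA hB, hsNormSq_cfc_sub_cfc hA hB, Finset.mul_sum]
  refine Finset.sum_le_sum fun i _ => ?_
  rw [Finset.mul_sum]
  refine Finset.sum_le_sum fun j _ => ?_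
  rw [← mul_assoc]
  exact mul_le_mul_of_nonneg_right (hf_sq _ _) (Complex.normSq_nonneg _)

end Matrix

lemma hsNorm_eq_sqrt_hsNormSq {n : ℕ} (M : Matrix (Fin n) (Fin n) ℂ) :
    hsNorm M = √(hsNormSq M) :=
  rfl

lemma hsNorm_cfc_sub_cfc_le {n : ℕ} {A B : Matrix (Fin n) (Fin n) ℂ} (hA : A.IsHermitian)
    (hB : B.IsHermitian) {f : ℝ → ℝ} {K : NNReal} (hf : LipschitzWith K f) :
    hsNorm (cfc f A - cfc f B) ≤ K * hsNorm (A - B) := by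
  calc hsNorm (cfc f A - cfc f B) ≤ √(K ^ 2 * hsNormSq (A - B)) :=
        Real.sqrt_le_sqrt (hsNormSq_cfc_sub_cfc_le hA hB hf)
    _ = K * hsNorm (A - B) := by
        rw [Real.sqrt_mul (by positivity), Real.sqrt_sq K.coe_nonneg, hsNorm_eq_sqrt_hsNormSq]

lemma matAbs_eq_abs {n : ℕ} (M : Matrix (Fin n) (Fin n) ℂ) : matAbs M = CFC.abs M := by
  rw [CFC.abs, star_eq_conjTranspose,
    CFC.sqrt_eq_real_sqrt _ (posSemidef_conjTranspose_mul_self M).nonneg, cfcₙ_eq_cfc,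
    (posSemidef_conjTranspose_mul_self M).1.cfc_eq]
  rfl

theorem stmt7 :
    ∃ C : ℝ, ∀ (n : ℕ) (A B : Matrix (Fin n) (Fin n) ℂ),
      A.IsHermitian → B.IsHermitian →
      hsNorm (matAbs A - matAbs B) ≤ C * hsNorm (A - B) := by
  refine ⟨1, fun n A B hA hB => ?_⟩
  rw [matAbs_eq_abs, matAbs_eq_abs, CFC.abs_eq_cfc_norm A hA, CFC.abs_eq_cfc_norm B hB]
  exact_mod_cast hsNorm_cfc_sub_cfc_le hA hB lipschitzWith_one_norm
end

section
/- Let 𝒩 be a complex normed linear space and f a map from 𝒩 into n×n complex matrices such that (i) for all A, B ∈ 𝒩 the map λ ↦ f(A + λB) is entire (holomorphic on all of ℂ, matrix-valued), and (ii) there is a monotone nondecreasing function g on [0,∞) with ‖f(A)‖ ≤ g(‖A‖_𝒩) for all A. Then for all A, B in 𝒩: ‖f(A) − f(B)‖ ≤ ‖A − B‖_𝒩 · g(‖A‖_𝒩 + ‖B‖_𝒩 + 1). -/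
/-!
Restrict `f` to the complex line `λ ↦ M + λ • D` through the midpoint `M = (A + B) / 2` in the
direction `D = A - B`. For `‖λ‖ ≤ 1/2 + ‖D‖⁻¹` the point `M + λ • D` has norm at most
`‖A‖ + ‖B‖ + 1`, so Cauchy's estimate on circles of radius `‖D‖⁻¹` bounds the derivative by
`‖D‖ * g (‖A‖ + ‖B‖ + 1)` on the disc `‖λ‖ ≤ 1/2`; the mean value inequality between `λ = -1/2`
and `λ = 1/2` gives the claim. The Hilbert–Schmidt norm is the Euclidean norm of the vector of
entries, so the matrix-valued statement is the case `F = EuclideanSpace ℂ (Fin n × Fin n)` of a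
statement about maps into any complex normed space.
-/

open Matrix

open Metric

section

variable {E F : Type*} [NormedAddCommGroup E] [NormedSpace ℂ E]
  [NormedAddCommGroup F] [NormedSpace ℂ F]

theorem Complex.norm_sub_le_of_norm_le_on_closedBall_add {φ : ℂ → F} (hφ : Differentiable ℂ φ)
    {ρ R C : ℝ} (hR : 0 < R) (hC : ∀ z : ℂ, ‖z‖ ≤ ρ + R → ‖φ z‖ ≤ C)
    {z w : ℂ} (hz : ‖z‖ ≤ ρ) (hw : ‖w‖ ≤ ρ) :
    ‖φ z - φ w‖ ≤ C / R * ‖z - w‖ := by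
  have hderiv : ∀ x ∈ closedBall (0 : ℂ) ρ, ‖deriv φ x‖ ≤ C / R := by
    intro x hx
    refine Complex.norm_deriv_le_of_forall_mem_sphere_norm_le hR hφ.diffContOnCl
      fun y hy => hC y ?_
    rw [mem_closedBall_zero_iff] at hx
    rw [mem_sphere_iff_norm] at hy
    calc ‖y‖ = ‖(y - x) + x‖ := by rw [sub_add_cancel]
      _ ≤ ‖y - x‖ + ‖x‖ := norm_add_le _ _
      _ ≤ ρ + R := by linarith
  exact (convex_closedBall 0 ρ).norm_image_sub_le_of_norm_deriv_le
    (fun x _ => hφ.differentiableAt) hderiv (mem_closedBall_zero_iff.2 hw)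
    (mem_closedBall_zero_iff.2 hz)

theorem norm_midpoint_add_smul_sub_le (A B : E) {lam : ℂ}
    (hlam : ‖lam‖ ≤ 1 / 2 + ‖A - B‖⁻¹) :
    ‖(2 : ℂ)⁻¹ • (A + B) + lam • (A - B)‖ ≤ ‖A‖ + ‖B‖ + 1 := by
  have hmid : ‖(2 : ℂ)⁻¹ • (A + B)‖ ≤ (‖A‖ + ‖B‖) / 2 := by
    rw [norm_smul, norm_inv, Complex.norm_two]
    linarith [norm_add_le A B]
  have hdir : ‖lam • (A - B)‖ ≤ (‖A‖ + ‖B‖) / 2 + 1 := by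
    rw [norm_smul]
    calc ‖lam‖ * ‖A - B‖ ≤ (1 / 2 + ‖A - B‖⁻¹) * ‖A - B‖ := by gcongr
      _ ≤ ‖A - B‖ / 2 + 1 := by
        rw [add_mul]
        gcongr
        · linarith
        · exact inv_mul_le_one
      _ ≤ (‖A‖ + ‖B‖) / 2 + 1 := by linarith [norm_sub_le A B]
  linarith [norm_add_le ((2 : ℂ)⁻¹ • (A + B)) (lam • (A - B))]

theorem norm_sub_le_of_differentiable_on_lines {φ : E → F} {g : ℝ → ℝ}
    (hg : MonotoneOn g (Set.Ici 0))
    (hφ : ∀ A B : E, Differentiable ℂ fun lam : ℂ => φ (A + lam • B))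
    (hb : ∀ A : E, ‖φ A‖ ≤ g ‖A‖) (A B : E) :
    ‖φ A - φ B‖ ≤ ‖A - B‖ * g (‖A‖ + ‖B‖ + 1) := by
  rcases eq_or_ne A B with rfl | hAB
  · simp
  have hd : 0 < ‖A - B‖ := norm_pos_iff.2 (sub_ne_zero.2 hAB)
  set M : E := (2 : ℂ)⁻¹ • (A + B)
  have hbound : ∀ z : ℂ, ‖z‖ ≤ 1 / 2 + ‖A - B‖⁻¹ →
      ‖φ (M + z • (A - B))‖ ≤ g (‖A‖ + ‖B‖ + 1) := fun z hz =>
    (hb _).trans <| hg (norm_nonneg _) (Set.mem_Ici.2 (by positivity))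
      (norm_midpoint_add_smul_sub_le A B hz)
  have hA : M + (2 : ℂ)⁻¹ • (A - B) = A := by module
  have hB : M + (-(2 : ℂ)⁻¹) • (A - B) = B := by module
  have key := Complex.norm_sub_le_of_norm_le_on_closedBall_add (hφ M (A - B)) (inv_pos.2 hd)
    hbound (z := 2⁻¹) (w := -2⁻¹) (by norm_num) (by norm_num)
  rw [hA, hB] at key
  calc ‖φ A - φ B‖ ≤ g (‖A‖ + ‖B‖ + 1) / ‖A - B‖⁻¹ * ‖(2 : ℂ)⁻¹ - -2⁻¹‖ := key
    _ = ‖A - B‖ * g (‖A‖ + ‖B‖ + 1) := by norm_num; ring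

end

namespace Matrix

variable {n : ℕ}

noncomputable def toEuclideanSpace (M : Matrix (Fin n) (Fin n) ℂ) :
    EuclideanSpace ℂ (Fin n × Fin n) :=
  WithLp.toLp 2 fun p => M p.1 p.2

theorem toEuclideanSpace_sub (M N : Matrix (Fin n) (Fin n) ℂ) :
    toEuclideanSpace (M - N) = toEuclideanSpace M - toEuclideanSpace N := rfl

theorem hsNorm_eq_norm_toEuclideanSpace (M : Matrix (Fin n) (Fin n) ℂ) :
    hsNorm M = ‖toEuclideanSpace M‖ := by
  simp [hsNorm, EuclideanSpace.norm_eq, toEuclideanSpace, Complex.sq_norm, Fintype.sum_prod_type]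

end Matrix

theorem stmt8 {n : ℕ} (𝒩 : Type*) [NormedAddCommGroup 𝒩] [NormedSpace ℂ 𝒩]
    (f : 𝒩 → Matrix (Fin n) (Fin n) ℂ) (g : ℝ → ℝ)
    (hg : MonotoneOn g (Set.Ici 0))
    (hf : ∀ A B : 𝒩, ∀ i j : Fin n,
      Differentiable ℂ (fun lam : ℂ => f (A + lam • B) i j))
    (hb : ∀ A : 𝒩, hsNorm (f A) ≤ g ‖A‖) :
    ∀ A B : 𝒩, hsNorm (f A - f B) ≤ ‖A - B‖ * g (‖A‖ + ‖B‖ + 1) := by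
  intro A B
  simp only [hsNorm_eq_norm_toEuclideanSpace, toEuclideanSpace_sub] at hb ⊢
  exact norm_sub_le_of_differentiable_on_lines hg
    (fun A B => differentiable_euclidean.2 fun p => hf A B p.1 p.2) hb A B
end

section
/- For ε > 0 define h_ε(s) := ∫_0^ε (α/(α² + ε⁴))·sin(αs) dα for s ≥ 0. Then |h_ε(s)| ≤ 4 for all s ≥ 0 and all ε ∈ (0,1). -/
open MeasureTheory intervalIntegral

/-! Write `f x = x / (x² + c)` with `c = ε⁴` and `b = ε`.
For `b s ≤ π/2` the bounds `|sin y| ≤ |y|` and `f x ≤ 1/x` bound the integral by `b s`.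
Otherwise split at `a = π/(2s)`: the piece over `[0, a]` is at most `a s = π/2`, and over `[a, b]`
integration by parts against `-cos (x s) / s`, using `|f| ≤ 1/x` and `|f'| ≤ 1/x²`, bounds it
by `2/(a s) = 4/π`. -/

open Real Set

theorem integral_inv_sq_of_pos {a b : ℝ} (ha : 0 < a) (hab : a ≤ b) :
    ∫ x in a..b, (x ^ 2)⁻¹ = a⁻¹ - b⁻¹ := by
  have h0 : (0 : ℝ) ∉ uIcc a b := fun h => by rw [uIcc_of_le hab] at h; linarith [h.1]
  have := integral_zpow (n := -2) (Or.inr ⟨by norm_num, h0⟩)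
  simp only [zpow_neg, zpow_ofNat] at this
  rw [this]
  norm_num
  ring

theorem abs_integral_mul_sin_le_of_abs_le_inv {f : ℝ → ℝ} {a s : ℝ} (ha : 0 ≤ a) (hs : 0 ≤ s)
    (hf : ∀ x ∈ Ioc 0 a, |f x| ≤ x⁻¹) : |∫ x in 0..a, f x * sin (x * s)| ≤ a * s := by
  have hbound : ∀ x ∈ uIoc 0 a, ‖f x * sin (x * s)‖ ≤ s := by
    intro x hx
    rw [uIoc_of_le ha] at hx
    have hsin : |sin (x * s)| ≤ x * s :=
      abs_sin_le_abs.trans_eq (abs_of_nonneg (by nlinarith [hx.1]))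
    calc ‖f x * sin (x * s)‖ = |f x| * |sin (x * s)| := by rw [Real.norm_eq_abs, abs_mul]
      _ ≤ x⁻¹ * (x * s) := mul_le_mul (hf x hx) hsin (abs_nonneg _) (inv_nonneg.2 hx.1.le)
      _ = s := by field_simp [hx.1.ne']
  simpa [abs_of_nonneg ha, mul_comm] using intervalIntegral.norm_integral_le_of_norm_le_const hbound

theorem abs_integral_mul_deriv_le_of_abs_le_inv {f f' g g' : ℝ → ℝ} {a b M : ℝ}
    (ha : 0 < a) (hab : a ≤ b)
    (hf : ∀ x ∈ uIcc a b, HasDerivAt f (f' x) x) (hg : ∀ x ∈ uIcc a b, HasDerivAt g (g' x) x)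
    (hf' : IntervalIntegrable f' volume a b) (hg' : IntervalIntegrable g' volume a b)
    (hfb : ∀ x ∈ Icc a b, |f x| ≤ x⁻¹) (hf'b : ∀ x ∈ Icc a b, |f' x| ≤ (x ^ 2)⁻¹)
    (hgb : ∀ x ∈ Icc a b, |g x| ≤ M) :
    |∫ x in a..b, f x * g' x| ≤ 2 * M / a := by
  have hpos : ∀ x ∈ Icc a b, 0 < x := fun x hx => ha.trans_le hx.1
  have hM : 0 ≤ M := (abs_nonneg _).trans (hgb a ⟨le_rfl, hab⟩)
  have hend : ∀ x ∈ Icc a b, |f x * g x| ≤ x⁻¹ * M := fun x hx => by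
    rw [abs_mul]
    exact mul_le_mul (hfb x hx) (hgb x hx) (abs_nonneg _) (inv_nonneg.2 (hpos x hx).le)
  have hint : |∫ x in a..b, f' x * g x| ≤ (a⁻¹ - b⁻¹) * M := by
    rw [← integral_inv_sq_of_pos ha hab, ← intervalIntegral.integral_mul_const M,
      ← Real.norm_eq_abs]
    refine intervalIntegral.norm_integral_le_of_norm_le hab (ae_of_all _ fun x hx => ?_) ?_
    · rw [Real.norm_eq_abs, abs_mul]
      exact mul_le_mul (hf'b x (Ioc_subset_Icc_self hx)) (hgb x (Ioc_subset_Icc_self hx))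
        (abs_nonneg _) (by positivity)
    · refine (ContinuousOn.intervalIntegrable ?_).mul_const M
      rw [uIcc_of_le hab]
      exact (continuousOn_pow 2).inv₀ fun x hx => (pow_pos (hpos x hx) 2).ne'
  rw [intervalIntegral.integral_mul_deriv_eq_deriv_mul hf hg hf' hg']
  calc _ ≤ |f b * g b| + |f a * g a| + |∫ x in a..b, f' x * g x| :=
        (abs_sub _ _).trans (add_le_add_left (abs_sub _ _) _)
    _ ≤ b⁻¹ * M + a⁻¹ * M + (a⁻¹ - b⁻¹) * M :=
        add_le_add (add_le_add (hend b ⟨hab, le_rfl⟩) (hend a ⟨le_rfl, hab⟩)) hint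
    _ = 2 * M / a := by ring

section

variable {c : ℝ}

theorem hasDerivAt_div_sq_add (hc : 0 < c) (x : ℝ) :
    HasDerivAt (fun x => x / (x ^ 2 + c)) ((c - x ^ 2) / (x ^ 2 + c) ^ 2) x := by
  refine ((hasDerivAt_id' x).div ((hasDerivAt_pow 2 x).add_const c) (by positivity)).congr_deriv ?_
  ring

theorem abs_div_sq_add_le_inv (hc : 0 ≤ c) {x : ℝ} (hx : 0 < x) : |x / (x ^ 2 + c)| ≤ x⁻¹ := by
  rw [abs_of_nonneg (by positivity), div_le_iff₀ (by positivity)]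
  field_simp
  nlinarith

theorem abs_sub_sq_div_sq_add_sq_le (hc : 0 ≤ c) {x : ℝ} (hx : x ≠ 0) :
    |(c - x ^ 2) / (x ^ 2 + c) ^ 2| ≤ (x ^ 2)⁻¹ := by
  have hx2 : 0 < x ^ 2 := by positivity
  rw [abs_div, abs_of_pos (by positivity : (0:ℝ) < (x ^ 2 + c) ^ 2),
    div_le_iff₀ (by positivity)]
  calc |c - x ^ 2| ≤ x ^ 2 + c := abs_le.2 ⟨by linarith, by linarith⟩
    _ ≤ (x ^ 2)⁻¹ * (x ^ 2 + c) ^ 2 := by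
        rw [inv_mul_eq_div, le_div_iff₀ hx2]
        nlinarith

theorem abs_integral_div_sq_add_mul_sin_le_four (hc : 0 < c) {b s : ℝ} (hb : 0 ≤ b) (hs : 0 ≤ s) :
    |∫ x in 0..b, x / (x ^ 2 + c) * sin (x * s)| ≤ 4 := by
  have hfb : ∀ x, 0 < x → |x / (x ^ 2 + c)| ≤ x⁻¹ := fun x hx => abs_div_sq_add_le_inv hc.le hx
  rcases le_or_gt (b * s) (π / 2) with hsmall | hlarge
  · exact (abs_integral_mul_sin_le_of_abs_le_inv hb hs fun x hx => hfb x hx.1).trans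
      (by linarith [pi_le_four])
  have hs0 : 0 < s := hs.lt_of_ne (by rintro rfl; linarith [pi_pos])
  set a := π / (2 * s) with ha
  have has : a * s = π / 2 := by rw [ha]; field_simp
  have ha0 : 0 < a := by positivity
  have hab : a ≤ b := le_of_mul_le_mul_right (by linarith) hs0
  have hcont : Continuous fun x => x / (x ^ 2 + c) * sin (x * s) := by
    fun_prop (disch := intro x; positivity)
  have hsin : ∀ x, HasDerivAt (fun x => -cos (x * s) / s) (sin (x * s)) x := fun x => by
    refine (((hasDerivAt_mul_const s).cos).neg.div_const s).congr_deriv ?_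
    rw [neg_mul, neg_neg, mul_div_cancel_right₀ _ hs0.ne']
  have hupper := abs_integral_mul_deriv_le_of_abs_le_inv ha0 hab
    (fun x _ => hasDerivAt_div_sq_add hc x) (fun x _ => hsin x)
    (Continuous.intervalIntegrable (by fun_prop (disch := intro x; positivity)) _ _)
    (Continuous.intervalIntegrable (by fun_prop) _ _) (fun x hx => hfb x (ha0.trans_le hx.1))
    (fun x hx => abs_sub_sq_div_sq_add_sq_le hc.le (ha0.trans_le hx.1).ne')
    (M := 1 / s) fun x _ => by rw [abs_div, abs_neg, abs_of_pos hs0]; gcongr; exact abs_cos_le_one _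
  rw [← intervalIntegral.integral_add_adjacent_intervals (hcont.intervalIntegrable 0 a)
    (hcont.intervalIntegrable a b)]
  calc _ ≤ a * s + 2 * (1 / s) / a := (abs_add_le _ _).trans (add_le_add
        (abs_integral_mul_sin_le_of_abs_le_inv ha0.le hs fun x hx => hfb x hx.1) hupper)
    _ = π / 2 + 4 / π := by rw [has, ha]; field_simp; ring
    _ ≤ 4 := by
        have : 4 / π ≤ 4 / 3 := by gcongr; exact pi_gt_three.le
        linarith [pi_le_four]

end

theorem stmt13_general (ε : ℝ) (hε0 : 0 < ε) (s : ℝ) (hs : 0 ≤ s) :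
    |∫ α in (0:ℝ)..ε, (α / (α ^ 2 + ε ^ 4)) * Real.sin (α * s)| ≤ 4 :=
  abs_integral_div_sq_add_mul_sin_le_four (by positivity) hε0.le hs

theorem stmt13 (ε : ℝ) (hε0 : 0 < ε) (hε1 : ε < 1) (s : ℝ) (hs : 0 ≤ s) :
    |∫ α in (0:ℝ)..ε, (α / (α ^ 2 + ε ^ 4)) * Real.sin (α * s)| ≤ 4 :=
  stmt13_general ε hε0 s hs
end

section
/- Let f : ℝ → ℂ be defined by f(r) := ∫_{−π}^{π} (1/2π)·e^{−i r cos p} dp (the Bessel-type oscillatory integral). There exists a constant C₁ such that |f(r)| ≤ C₁·(1 + |r|)^{−1/2} for all r ∈ ℝ. -/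
/-!
Since `cos` is even and `cos (π - p) = -cos p`, `∫_{-π}^{π} e^{-ir cos p} dp = 2 (K(-r) + K(r))`
with `K(s) = ∫₀^{π/2} e^{is cos p} dp` (`cosPhaseIntegral s`), and `K(-s) = conj K(s)`; so it
suffices to bound `K(-t)` for `t > 0`. On `[0, ε]` the integrand has modulus one. On `[ε, π/2]` the
phase `-t cos p` has increasing derivative `t sin p ≥ t sin ε ≥ 2tε/π`, so van der Corput's
first-derivative test (integration by parts against `e^{iφ} = (iφ')⁻¹ (e^{iφ})'`) bounds that piece
by `π / (tε)`. Choosing `ε = t^{-1/2}` balances the two pieces.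
-/

open MeasureTheory intervalIntegral Real
open Complex (I)
open scoped Interval Complex

theorem norm_integral_cexp_mul_I_le_of_mul_eq_one {φ φ' g g' : ℝ → ℝ} {a b : ℝ} (hab : a ≤ b)
    (hφ : ∀ x ∈ Set.Icc a b, HasDerivAt φ (φ' x) x)
    (hg : ∀ x ∈ Set.Icc a b, HasDerivAt g (g' x) x) (hg' : IntervalIntegrable g' volume a b)
    (hφg : ∀ x ∈ Set.Icc a b, φ' x * g x = 1) :
    ‖∫ x in a..b, cexp (φ x * I)‖ ≤ |g a| + |g b| + ∫ x in a..b, |g' x| := by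
  rw [← Set.uIcc_of_le hab] at hφ hg hφg
  have hφ'_cont : ContinuousOn φ' [[a, b]] := by
    have hg_cont : ContinuousOn g [[a, b]] := HasDerivAt.continuousOn hg
    refine (hg_cont.inv₀ fun x hx h ↦ by simpa [h] using hφg x hx).congr fun x hx ↦ ?_
    exact eq_inv_of_mul_eq_one_left (hφg x hx)
  have hv : ∀ x ∈ [[a, b]], HasDerivAt (fun x ↦ cexp (φ x * I)) (φ' x * I * cexp (φ x * I)) x :=
    fun x hx ↦ by simpa [mul_comm] using ((hφ x hx).ofReal_comp.mul_const I).cexp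
  have hu : ∀ x ∈ [[a, b]], HasDerivAt (fun x ↦ -(g x : ℂ) * I) (-(g' x : ℂ) * I) x :=
    fun x hx ↦ (hg x hx).ofReal_comp.neg.mul_const I
  have hv' : IntervalIntegrable (fun x ↦ φ' x * I * cexp (φ x * I)) volume a b :=
    (((Complex.continuous_ofReal.comp_continuousOn hφ'_cont).mul continuousOn_const).mul
      (HasDerivAt.continuousOn hv)).intervalIntegrable
  have hu' : IntervalIntegrable (fun x ↦ -(g' x : ℂ) * I) volume a b :=
    have : IntervalIntegrable (fun x ↦ (g' x : ℂ)) volume a b := ⟨hg'.1.ofReal, hg'.2.ofReal⟩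
    this.neg.mul_const _
  have hparts : ∫ x in a..b, -(g x : ℂ) * I * (φ' x * I * cexp (φ x * I))
      = ∫ x in a..b, cexp (φ x * I) := by
    refine integral_congr fun x hx ↦ ?_
    have h := congrArg (fun t : ℝ ↦ (t : ℂ)) (hφg x hx)
    push_cast at h
    linear_combination cexp (φ x * I) * h - g x * φ' x * cexp (φ x * I) * Complex.I_sq
  have hboundary : ∀ x, ‖-(g x : ℂ) * I * cexp (φ x * I)‖ = |g x| := fun x ↦ by
    simp [Complex.norm_exp_ofReal_mul_I]
  have hremainder : ‖∫ x in a..b, -(g' x : ℂ) * I * cexp (φ x * I)‖ ≤ ∫ x in a..b, |g' x| := by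
    refine (intervalIntegral.norm_integral_le_integral_norm hab).trans_eq
      (integral_congr fun x _ ↦ ?_)
    simp [Complex.norm_exp_ofReal_mul_I]
  rw [← hparts, integral_mul_deriv_eq_deriv_mul hu hv hu' hv']
  refine (norm_sub_le _ _).trans (add_le_add ((norm_sub_le _ _).trans_eq ?_) hremainder)
  rw [hboundary, hboundary, add_comm]

theorem norm_integral_cexp_mul_I_le_of_monotone {φ φ' φ'' : ℝ → ℝ} {a b c : ℝ} (hab : a ≤ b)
    (hc : 0 < c) (hφ : ∀ x ∈ Set.Icc a b, HasDerivAt φ (φ' x) x)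
    (hφ' : ∀ x ∈ Set.Icc a b, HasDerivAt φ' (φ'' x) x) (hφ'' : IntervalIntegrable φ'' volume a b)
    (hcφ' : ∀ x ∈ Set.Icc a b, c ≤ φ' x) (hφ''_nonneg : ∀ x ∈ Set.Icc a b, 0 ≤ φ'' x) :
    ‖∫ x in a..b, cexp (φ x * I)‖ ≤ 2 / c := by
  have hφ'_pos : ∀ x ∈ Set.Icc a b, 0 < φ' x := fun x hx ↦ hc.trans_le (hcφ' x hx)
  have hinv : ∀ x ∈ Set.Icc a b, HasDerivAt (fun x ↦ (φ' x)⁻¹) (-φ'' x * (φ' x ^ 2)⁻¹) x :=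
    fun x hx ↦ by simpa only [div_eq_mul_inv] using (hφ' x hx).fun_inv (hφ'_pos x hx).ne'
  have hinv_int : IntervalIntegrable (fun x ↦ -φ'' x * (φ' x ^ 2)⁻¹) volume a b := by
    rw [← Set.uIcc_of_le hab] at hφ' hφ'_pos
    exact hφ''.neg.mul_continuousOn ((HasDerivAt.continuousOn hφ').pow 2 |>.inv₀
      fun x hx ↦ pow_ne_zero 2 (hφ'_pos x hx).ne')
  have hvariation : ∫ x in a..b, |-φ'' x * (φ' x ^ 2)⁻¹| = (φ' a)⁻¹ - (φ' b)⁻¹ := by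
    have hftc : ∫ x in a..b, -φ'' x * (φ' x ^ 2)⁻¹ = (φ' b)⁻¹ - (φ' a)⁻¹ :=
      integral_eq_sub_of_hasDerivAt (Set.uIcc_of_le hab ▸ hinv) hinv_int
    rw [← neg_sub, ← hftc, ← intervalIntegral.integral_neg]
    refine integral_congr fun x hx ↦ ?_
    rw [Set.uIcc_of_le hab] at hx
    exact abs_of_nonpos (mul_nonpos_of_nonpos_of_nonneg (neg_nonpos.2 (hφ''_nonneg x hx))
      (by positivity))
  refine (norm_integral_cexp_mul_I_le_of_mul_eq_one hab hφ hinv hinv_int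
    fun x hx ↦ mul_inv_cancel₀ (hφ'_pos x hx).ne').trans ?_
  have ha := hφ'_pos a (Set.left_mem_Icc.2 hab)
  have hb := hφ'_pos b (Set.right_mem_Icc.2 hab)
  have hca : (φ' a)⁻¹ ≤ c⁻¹ := inv_anti₀ hc (hcφ' a (Set.left_mem_Icc.2 hab))
  rw [hvariation, abs_of_pos (inv_pos.2 ha), abs_of_pos (inv_pos.2 hb), div_eq_mul_inv]
  linarith

theorem norm_integral_cexp_mul_I_le_abs_sub (φ : ℝ → ℝ) (a b : ℝ) :
    ‖∫ x in a..b, cexp (φ x * I)‖ ≤ |b - a| := by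
  simpa using norm_integral_le_of_norm_le_const (C := 1) fun x _ ↦
    (Complex.norm_exp_ofReal_mul_I (φ x)).le

noncomputable def cosPhaseIntegral (s : ℝ) : ℂ :=
  ∫ p in (0)..(π / 2), cexp (↑(s * cos p) * I)

theorem norm_cosPhaseIntegral_neg (s : ℝ) :
    ‖cosPhaseIntegral (-s)‖ = ‖cosPhaseIntegral s‖ := by
  rw [cosPhaseIntegral, cosPhaseIntegral, ← Complex.norm_conj, ← intervalIntegral_conj]
  congr 2 with p
  rw [← Complex.exp_conj, map_mul, Complex.conj_ofReal, Complex.conj_I]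
  push_cast
  ring_nf

theorem norm_cosPhaseIntegral_le_pi_div_two (s : ℝ) : ‖cosPhaseIntegral s‖ ≤ π / 2 :=
  (norm_integral_cexp_mul_I_le_abs_sub _ 0 (π / 2)).trans_eq <| by
    rw [sub_zero, abs_of_pos (by positivity)]

theorem norm_integral_cexp_neg_mul_cos_le {t ε : ℝ} (ht : 0 < t) (hε : 0 < ε)
    (hεπ : ε ≤ π / 2) :
    ‖∫ p in ε..(π / 2), cexp (↑(-t * cos p) * I)‖ ≤ π / (t * ε) := by
  have hsin : 2 / π * ε ≤ sin ε := mul_le_sin hε.le hεπ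
  have hsin_pos : 0 < sin ε := lt_of_lt_of_le (by positivity) hsin
  refine (norm_integral_cexp_mul_I_le_of_monotone hεπ (c := t * sin ε) (φ' := fun p ↦ t * sin p)
    (φ'' := fun p ↦ t * cos p) (by positivity) (fun p _ ↦ ?_) (fun p _ ↦ ?_)
    ((by fun_prop : Continuous fun p ↦ t * cos p).intervalIntegrable _ _)
    (fun p hp ↦ ?_) (fun p hp ↦ ?_)).trans ?_
  · simpa using (hasDerivAt_cos p).const_mul (-t)
  · exact (hasDerivAt_sin p).const_mul t
  · exact mul_le_mul_of_nonneg_left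
      (sin_le_sin_of_le_of_le_pi_div_two (by linarith [pi_pos]) hp.2 hp.1) ht.le
  · exact mul_nonneg ht.le (cos_nonneg_of_mem_Icc ⟨by linarith [pi_pos, hp.1], hp.2⟩)
  · rw [div_le_div_iff₀ (by positivity) (by positivity)]
    calc 2 * (t * ε) = π * (t * (2 / π * ε)) := by field_simp
      _ ≤ π * (t * sin ε) := by gcongr

theorem norm_cosPhaseIntegral_neg_le {t : ℝ} (ht : 0 < t) :
    ‖cosPhaseIntegral (-t)‖ ≤ (1 + π) / √t := by
  set ε := (√t)⁻¹ with hε_def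
  have hε : 0 < ε := by positivity
  rw [div_eq_mul_inv, ← hε_def]
  rcases le_or_gt (π / 2) ε with hεπ | hεπ
  · nlinarith [norm_cosPhaseIntegral_le_pi_div_two (-t), pi_pos]
  have hint (a b : ℝ) : IntervalIntegrable (fun p ↦ cexp (↑(-t * cos p) * I)) volume a b :=
    (by fun_prop : Continuous fun p : ℝ ↦ cexp (↑(-t * cos p) * I)).intervalIntegrable a b
  have htε : t * ε = ε⁻¹ := by rw [hε_def, inv_inv, ← div_eq_mul_inv, div_sqrt]
  rw [cosPhaseIntegral, ← integral_add_adjacent_intervals (hint 0 ε) (hint ε (π / 2))]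
  calc _ ≤ ‖∫ p in (0)..ε, cexp (↑(-t * cos p) * I)‖
        + ‖∫ p in ε..(π / 2), cexp (↑(-t * cos p) * I)‖ := norm_add_le _ _
    _ ≤ ε + π / (t * ε) := add_le_add
        ((norm_integral_cexp_mul_I_le_abs_sub _ 0 ε).trans_eq (by rw [sub_zero, abs_of_pos hε]))
        (norm_integral_cexp_neg_mul_cos_le ht hε hεπ.le)
    _ = (1 + π) * ε := by rw [htε, div_inv_eq_mul]; ring

theorem norm_cosPhaseIntegral_le (s : ℝ) :
    ‖cosPhaseIntegral s‖ ≤ 6 * (1 + |s|) ^ (-(1 / 2) : ℝ) := by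
  rw [rpow_neg (by positivity), ← sqrt_eq_rpow, ← div_eq_mul_inv,
    le_div_iff₀ (by positivity)]
  have hu := sq_sqrt (by positivity : (0 : ℝ) ≤ 1 + |s|)
  rcases le_or_gt |s| 1 with hs | hs
  · nlinarith [norm_cosPhaseIntegral_le_pi_div_two s, pi_lt_d2, norm_nonneg (cosPhaseIntegral s),
      sqrt_nonneg (1 + |s|)]
  have habs : ‖cosPhaseIntegral s‖ = ‖cosPhaseIntegral (-|s|)‖ := by
    rcases abs_choice s with h | h <;> rw [h] <;> simp [norm_cosPhaseIntegral_neg]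
  rw [habs]
  set J := ‖cosPhaseIntegral (-|s|)‖
  have hv := sq_sqrt (abs_nonneg s)
  have hJ : J * √|s| ≤ 1 + π :=
    (le_div_iff₀ (by positivity)).1 (norm_cosPhaseIntegral_neg_le (by positivity))
  have hJ_sq : (J * √(1 + |s|)) ^ 2 ≤ 36 := calc
    (J * √(1 + |s|)) ^ 2 = J ^ 2 * (1 + |s|) := by rw [mul_pow, hu]
    _ ≤ 2 * (J * √|s|) ^ 2 := by nlinarith
    _ ≤ 2 * (1 + π) ^ 2 := by gcongr
    _ ≤ 36 := by nlinarith [pi_lt_d2, pi_pos]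
  nlinarith [norm_nonneg (cosPhaseIntegral (-|s|))]

theorem integral_cexp_mul_cos_eq (s : ℝ) :
    ∫ p in (-π)..π, cexp (↑(s * cos p) * I)
      = 2 * (cosPhaseIntegral s + cosPhaseIntegral (-s)) := by
  set F := fun p ↦ cexp (↑(s * cos p) * I)
  have hint (a b : ℝ) : IntervalIntegrable F volume a b :=
    (by fun_prop : Continuous F).intervalIntegrable a b
  have heven : ∫ p in (-π)..0, F p = ∫ p in (0)..π, F p := by
    simpa [F] using (integral_comp_neg (a := 0) (b := π) F).symm
  have hreflect : ∫ p in (π / 2)..π, F p = cosPhaseIntegral (-s) := by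
    have h := integral_comp_sub_left (a := 0) (b := π / 2) F π
    rw [sub_zero, sub_half] at h
    rw [← h, cosPhaseIntegral]
    congr 1 with p
    simp only [F, cos_pi_sub, mul_neg, neg_mul]
  have hquarter : ∫ p in (0)..(π / 2), F p = cosPhaseIntegral s := rfl
  rw [← integral_add_adjacent_intervals (hint _ 0) (hint 0 π), heven,
    ← integral_add_adjacent_intervals (hint 0 (π / 2)) (hint _ π), hreflect, hquarter]
  ring

theorem stmt15 :
    ∃ C₁ : ℝ, ∀ r : ℝ,
      ‖(∫ p in (-Real.pi)..Real.pi,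
          (1 / (2 * Real.pi) : ℂ) * Complex.exp (-(Complex.I * (r : ℂ) * (Real.cos p : ℂ))))‖
        ≤ C₁ * (1 + |r|) ^ (-(1/2) : ℝ) := by
  refine ⟨12 / π, fun r ↦ ?_⟩
  have hphase (p : ℝ) : -(I * (r : ℂ) * (cos p : ℂ)) = ↑(-r * cos p) * I := by
    push_cast; ring
  have hconst : ‖(1 / (2 * π) : ℂ)‖ * ‖(2 : ℂ)‖ = 1 / π := by simp [abs_of_pos pi_pos]
  have hsum := (norm_add_le _ _).trans
    (add_le_add (norm_cosPhaseIntegral_le (-r)) (norm_cosPhaseIntegral_le r))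
  rw [abs_neg] at hsum
  simp_rw [hphase]
  rw [intervalIntegral.integral_const_mul, integral_cexp_mul_cos_eq, neg_neg, norm_mul, norm_mul,
    ← mul_assoc, hconst]
  calc _ ≤ 1 / π * (6 * (1 + |r|) ^ (-(1 / 2) : ℝ) + 6 * (1 + |r|) ^ (-(1 / 2) : ℝ)) := by
        gcongr
    _ = _ := by ring
end
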